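/- Let p be a prime, d ≥ 1, s ≥ 0, and N, u ∈ Z^d with N ≥ 0, u ≥ 0. Define B(N, m) = (∑_i N_i m_i)!/∏_i (m_i!)^{N_i}. Then the p-adic valuation of B(N, p^s·u)/B(N, u) is zero, i.e., v_p(B(N, p^s·u)) = v_p(B(N, u)). -/

import Mathlib

/-- `B(N, m) = (∑ᵢ Nᵢ mᵢ)! / ∏ᵢ (mᵢ!)^{Nᵢ}`. -/
def Bfun {d : ℕ} (N m : Fin d → ℕ) : ℚ :=
  ((∑ i, N i * m i).factorial : ℚ) / ∏ i, ((m i).factorial : ℚ) ^ (N i)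

/-!
Legendre's formula gives `v_p((p n)!) = v_p(n!) + n`. Scaling `m` by `p` therefore raises the
valuation of the numerator of `B(N, m)` by `∑ᵢ Nᵢ mᵢ` and that of the denominator by the same
amount `∑ᵢ Nᵢ mᵢ`, so `v_p(B(N, p m)) = v_p(B(N, m))`; iterate `s` times.
-/

theorem padicValRat_finset_prod {ι : Type*} (p : ℕ) [Fact p.Prime] (s : Finset ι) {f : ι → ℚ}
    (hf : ∀ i ∈ s, f i ≠ 0) :
    padicValRat p (∏ i ∈ s, f i) = ∑ i ∈ s, padicValRat p (f i) := by
  classical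
  induction s using Finset.induction_on with
  | empty => simp
  | insert a s ha ih =>
    rw [Finset.prod_insert ha, Finset.sum_insert ha,
      padicValRat.mul (hf a (s.mem_insert_self a))
        (Finset.prod_ne_zero_iff.2 fun i hi => hf i (Finset.mem_insert_of_mem hi)),
      ih fun i hi => hf i (Finset.mem_insert_of_mem hi)]

theorem padicValRat_Bfun (p : ℕ) [Fact p.Prime] {d : ℕ} (N m : Fin d → ℕ) :
    padicValRat p (Bfun N m)
      = (padicValNat p (∑ i, N i * m i).factorial : ℤ)
        - ∑ i, (N i : ℤ) * padicValNat p (m i).factorial := by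
  have hfactorial (n : ℕ) : (n.factorial : ℚ) ≠ 0 := by exact_mod_cast n.factorial_ne_zero
  rw [Bfun, padicValRat.div (hfactorial _) (Finset.prod_ne_zero_iff.2 fun i _ =>
      pow_ne_zero _ (hfactorial _)),
    padicValRat_finset_prod p _ fun i _ => pow_ne_zero _ (hfactorial _)]
  simp only [padicValRat.pow, padicValRat.of_nat]

theorem padicValRat_Bfun_prime_mul (p : ℕ) [Fact p.Prime] {d : ℕ} (N m : Fin d → ℕ) :
    padicValRat p (Bfun N (fun i => p * m i)) = padicValRat p (Bfun N m) := by
  have hsum : ∑ i, N i * (p * m i) = p * ∑ i, N i * m i := by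
    rw [Finset.mul_sum]
    exact Finset.sum_congr rfl fun i _ => by ring
  rw [padicValRat_Bfun, padicValRat_Bfun, hsum]
  simp only [padicValNat_factorial_mul]
  push_cast
  simp only [mul_add, Finset.sum_add_distrib]
  ring

theorem stmt13_general (p : ℕ) [Fact p.Prime] (d : ℕ) (s : ℕ)
    (N u : Fin d → ℕ) :
    padicValRat p (Bfun N (fun i => p ^ s * u i)) = padicValRat p (Bfun N u) := by
  induction s with
  | zero => simp
  | succ s ih =>
    simp only [pow_succ', mul_assoc]
    rw [padicValRat_Bfun_prime_mul, ih]

/-- `v_p(B(N, pˢ u)/B(N, u)) = 0`, i.e. `v_p(B(N, pˢ u)) = v_p(B(N, u))`. -/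
theorem stmt13 (p : ℕ) [Fact p.Prime] (d : ℕ) (hd : 0 < d) (s : ℕ)
    (N u : Fin d → ℕ) :
    padicValRat p (Bfun N (fun i => p ^ s * u i)) = padicValRat p (Bfun N u) :=
  stmt13_general p d s N u
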